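/- arXiv:2210.05331 — 5 statements merged into one kernel-verified Lean document; each statement's English description precedes it below -/
import Mathlib

section
/- Let f : X → Y satisfy L_D(f) = 0 (realizability), let c : X × Y → {0,1} be a requirement function such that for every x there exists y with c(x,y)=1, and let h_c denote the modification of a hypothesis h where h_c(x) = h(x) if c(x,h(x))=1 and otherwise h_c(x) = y_c(x) for a fixed deterministic choice y_c(x) with c(x,y_c(x))=1. Then for every hypothesis h : X → Y, L_D(f_c) ≤ L_D(h_c). -/
open scoped ENNReal

/-- The 0-1 generalization error `L_D(h) = P_{(x,y)~D}[h(x) ≠ y]` of a classifier. -/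
noncomputable def genError01 {X Y : Type} [DecidableEq Y] (D : PMF (X × Y)) (h : X → Y) : ℝ≥0∞ :=
  ∑' p : X × Y, if h p.1 = p.2 then 0 else D p

/-- The concurrent-verifier modification of a hypothesis `h` with respect to a
requirement `c` and a deterministic choice `yc` of a requirement-satisfying label. -/
def cvModify {X Y : Type} (c : X → Y → Bool) (yc : X → Y) (h : X → Y) : X → Y :=
  fun x => if c x (h x) then h x else yc x

/-- Under realizability (`L_D(f) = 0`), the modification `f_c` of the realizing
function has the smallest generalization error among all modified hypotheses `h_c`. -/
theorem fc_minimal {X Y : Type} [Fintype Y] [DecidableEq Y] (D : PMF (X × Y))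
    (c : X → Y → Bool) (yc : X → Y) (hyc : ∀ x, c x (yc x) = true)
    (f : X → Y) (hf : genError01 D f = 0) :
    ∀ h : X → Y, genError01 D (cvModify c yc f) ≤ genError01 D (cvModify c yc h) := by
  intro h
  have hzero : ∀ p : X × Y, f p.1 ≠ p.2 → D p = 0 := by
    intro p hp
    have := (ENNReal.tsum_eq_zero.mp hf) p
    simpa [hp] using this
  refine ENNReal.tsum_le_tsum fun p => ?_
  by_cases hD : D p = 0
  · simp [hD]
  · have hfp : f p.1 = p.2 := by
      by_contra hne; exact hD (hzero p hne)
    by_cases hc : c p.1 p.2 = true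
    · simp [cvModify, hfp, hc]
    · have h1 : cvModify c yc f p.1 = yc p.1 := by simp [cvModify, hfp, hc]
      have h2 : cvModify c yc h p.1 ≠ p.2 := by
        intro heq
        unfold cvModify at heq
        by_cases hch : c p.1 (h p.1) = true
        · rw [if_pos hch] at heq; exact hc (heq ▸ hch)
        · rw [if_neg (by simpa using hch)] at heq
          exact hc (heq ▸ hyc p.1)
      by_cases hf1 : cvModify c yc f p.1 = p.2
      · simp [hf1]
      · simp [hf1, h2]
end

section
/- Under the realizability assumption L_D(f) = 0, for every hypothesis h : X → Y and any requirement c, the modified hypothesis satisfies L_D(h_c) ≤ L_D(h) + L_D(f_c), where f_c is the modification of f by the same requirement. -/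
open scoped ENNReal

/-- Under realizability (`L_D(f) = 0`), for every hypothesis `h`,
`L_D(h_c) ≤ L_D(h) + L_D(f_c)`. -/
theorem modified_error_bound {X Y : Type} [Fintype Y] [DecidableEq Y] (D : PMF (X × Y))
    (c : X → Y → Bool) (yc : X → Y) (hyc : ∀ x, c x (yc x) = true)
    (f : X → Y) (hf : genError01 D f = 0) :
    ∀ h : X → Y,
      genError01 D (cvModify c yc h) ≤ genError01 D h + genError01 D (cvModify c yc f) := by
  intro h
  have hreal : ∀ p : X × Y, D p ≠ 0 → f p.1 = p.2 := by
    intro p hp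
    by_contra hne
    have h0 : (if f p.1 = p.2 then (0:ℝ≥0∞) else D p) ≠ 0 := by simp [hne, hp]
    have := (ENNReal.tsum_eq_zero.mp hf) p
    exact h0 this
  unfold genError01
  rw [← ENNReal.tsum_add]
  refine ENNReal.tsum_le_tsum fun p => ?_
  by_cases hp : D p = 0
  · simp [hp]
  · have hfp : f p.1 = p.2 := hreal p hp
    by_cases hh : h p.1 = p.2
    · by_cases hc : c p.1 p.2
      · simp [cvModify, hh, hc]
      · have : cvModify c yc h p.1 = cvModify c yc f p.1 := by
          simp [cvModify, hh, hfp, hc]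
        rw [this]
        exact le_add_self
    · have : (if cvModify c yc h p.1 = p.2 then (0:ℝ≥0∞) else D p) ≤ D p := by
        split <;> simp
      calc _ ≤ D p := this
        _ ≤ _ := by simp [hh]
end

section
/- If D is realizable (L_D(f) = 0 for some f : X → Y) and ĥ is any hypothesis with L_D(ĥ) ≤ ε for some ε ∈ (0,1), then for any requirement c the modified hypothesis ĥ_c satisfies L_D(ĥ_c) ≤ min over h_c in H_c of L_D(h_c) + ε, where H_c = {h_c : h ∈ H} and ĥ ∈ H. -/
open scoped ENNReal

/-- If `D` is realizable and `ĥ` has error at most `ε`, then for any requirement `c`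
the modified hypothesis `ĥ_c` is `ε`-optimal within the modified class `H_c`. -/
theorem itv_eps_optimal {X Y : Type} [Fintype Y] [DecidableEq Y] (D : PMF (X × Y))
    (c : X → Y → Bool) (yc : X → Y) (hyc : ∀ x, c x (yc x) = true)
    (f : X → Y) (hf : genError01 D f = 0)
    (H : Set (X → Y)) (hhat : X → Y) (hmem : hhat ∈ H)
    (ε : ℝ) (hε0 : 0 < ε) (hε1 : ε < 1)
    (hhat_err : genError01 D hhat ≤ ENNReal.ofReal ε) :
    genError01 D (cvModify c yc hhat) ≤
      (⨅ h ∈ H, genError01 D (cvModify c yc h)) + ENNReal.ofReal ε := by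
  set q : ℝ≥0∞ := ∑' p : X × Y, if c p.1 p.2 then 0 else D p with hq
  have hcv_sat : ∀ (h : X → Y) (x : X), c x (cvModify c yc h x) = true := by
    intro h x
    unfold cvModify
    by_cases hc : c x (h x) <;> simp [hc, hyc x]
  -- q ≤ L(h_c) for every h
  have hq_le : ∀ h : X → Y, q ≤ genError01 D (cvModify c yc h) := by
    intro h
    apply ENNReal.tsum_le_tsum
    intro p
    by_cases hc : c p.1 p.2
    · simp [hc]
    · have : cvModify c yc h p.1 ≠ p.2 := by
        intro he
        exact hc (by rw [← he]; exact hcv_sat h p.1)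
      simp [hc, this]
  -- L(ĥ_c) ≤ q + L(ĥ)
  have hmain : genError01 D (cvModify c yc hhat) ≤ q + genError01 D hhat := by
    unfold genError01
    rw [← ENNReal.tsum_add]
    apply ENNReal.tsum_le_tsum
    intro p
    by_cases hcv : cvModify c yc hhat p.1 = p.2
    · simp [hcv]
    · rw [if_neg hcv]
      by_cases hh : hhat p.1 = p.2
      · have hc : ¬ c p.1 p.2 := by
          intro hc
          apply hcv
          unfold cvModify
          rw [hh, if_pos hc]
        simp [hc, hh]
      · simp [hh]
  calc genError01 D (cvModify c yc hhat) ≤ q + genError01 D hhat := hmain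
    _ ≤ (⨅ h ∈ H, genError01 D (cvModify c yc h)) + ENNReal.ofReal ε := by
        apply add_le_add _ hhat_err
        exact le_iInf₂ fun h _ => hq_le h
end

section
/- There exist a finite label setting, a two-element hypothesis class H = {h_0, h_1}, a distribution D realizable by some f ∉ H, a requirement c consistent with f (i.e., c(x, f(x)) = 1 for all x), and ε ∈ (0,1), such that |L_D(h_0) − L_D(h_1)| ≤ ε but |L_D(h_{c,0}) − L_D(h_{c,1})| > ε, where h_{c,i} denotes the verifier modification of h_i. In particular, an algorithm returning an ε-optimal hypothesis in H may fail to return an ε-optimal hypothesis in H_c after modification. -/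
open scoped ENNReal

lemma genError01_pure {Y : Type} [DecidableEq Y] (y0 : Y) (h : Unit → Y) :
    genError01 (PMF.pure ((), y0)) h = if h () = y0 then 0 else 1 := by
  unfold genError01
  rw [tsum_eq_single ((), y0)]
  · simp
  · intro p hp
    rcases p with ⟨u, y⟩
    have : y ≠ y0 := by
      intro h'; apply hp; simp [h']
    simp [PMF.pure_apply, Prod.ext_iff, this]


/-- There is a finite-label setting with a two-element hypothesis class `{h0, h1}`,
a realizable distribution whose realizing function `f` lies outside the class, a
requirement `c` consistent with `f`, and `ε ∈ (0,1)`, such that the errors of `h0`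
and `h1` differ by at most `ε` while the errors of their verifier modifications
differ by more than `ε`. -/
theorem itv_counterexample :
    ∃ (X Y : Type) (_ : Fintype Y) (_ : DecidableEq Y) (h0 h1 f : X → Y) (D : PMF (X × Y))
      (c : X → Y → Bool) (yc : X → Y) (ε : ℝ),
      h0 ≠ h1 ∧ f ≠ h0 ∧ f ≠ h1 ∧
      genError01 D f = 0 ∧
      (∀ x, c x (f x) = true) ∧ (∀ x, c x (yc x) = true) ∧
      0 < ε ∧ ε < 1 ∧
      |(genError01 D h0).toReal - (genError01 D h1).toReal| ≤ ε ∧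
      |(genError01 D (cvModify c yc h0)).toReal -
        (genError01 D (cvModify c yc h1)).toReal| > ε := by
  refine ⟨Unit, Fin 3, inferInstance, inferInstance,
    (fun _ => 0), (fun _ => 1), (fun _ => 2), PMF.pure ((), 2),
    (fun _ y => decide (y ≠ 1)), (fun _ => 2), 1/2, ?_, ?_, ?_, ?_, ?_, ?_, ?_, ?_, ?_, ?_⟩
  · intro h; have := congrFun h (); simp at this
  · intro h; have := congrFun h (); simp at this
  · intro h; have := congrFun h (); simp at this
  · rw [genError01_pure]; simp
  · intro x; simp
  · intro x; simp
  · norm_num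
  · norm_num
  · rw [genError01_pure, genError01_pure]
    norm_num [show (0:Fin 3) ≠ 2 by decide, show (1:Fin 3) ≠ 2 by decide]
  · rw [genError01_pure, genError01_pure]
    simp only [cvModify]
    norm_num [show (0:Fin 3) ≠ 1 by decide, show (0:Fin 3) ≠ 2 by decide]
end

section
/- Let H be a set of functions X × Y → ℝ, let c : X × Y → {0,1} be a requirement, M > 0 a constant with M > |h(x,y)| for all h ∈ H and (x,y), and define h_c(x,y) = h(x,y) if c(x,y)=1 and h_c(x,y) = −M otherwise. Then for any sample S = ((x_1,y_1),...,(x_m,y_m)), the empirical Rademacher complexity of H_c = {h_c : h ∈ H} satisfies R_S(H_c) ≤ R_S(H). -/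
open Finset

/-- Empirical Rademacher complexity of a family `F` of real-valued functions on `Z`
with respect to the sample `S = (z_1, ..., z_m)`. -/
noncomputable def empRad {Z : Type*} {m : ℕ} (S : Fin m → Z) (F : Set (Z → ℝ)) : ℝ :=
  (∑ σ : Fin m → Bool,
      sSup ((fun f => ∑ i, (if σ i then (1 : ℝ) else -1) * f (S i)) '' F)) / (2 ^ m * m)

/-!
For a sign vector `σ`, the correlation of `h_c` with `σ` on the sample is the correlation of `h`
on the coordinates `C = {i | c(S i)}` plus a term that does not depend on `h` and averages to zero
over `σ`. Hence `R_S(H_c)` is the average over `σ` of the supremum of the `C`-partial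
correlations of `H`. Adding a coordinate `j` can only increase this average: the `T`-partial
correlation is the mean of the `(insert j T)`-partial correlations for `σ` and for `σ` with the
`j`-th sign flipped, so its supremum is at most the mean of the two suprema.
-/

section SignedSums

variable {Z : Type*} {m : ℕ} (S : Fin m → Z)

noncomputable def signedSum (T : Finset (Fin m)) (σ : Fin m → Bool) (f : Z → ℝ) : ℝ :=
  ∑ i ∈ T, (if σ i then (1 : ℝ) else -1) * f (S i)

noncomputable def supSignedSum (F : Set (Z → ℝ)) (T : Finset (Fin m)) : ℝ :=
  ∑ σ : Fin m → Bool, sSup (signedSum S T σ '' F)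

def flipAt (j : Fin m) (σ : Fin m → Bool) : Fin m → Bool :=
  Function.update σ j (!σ j)

theorem empRad_eq_supSignedSum (F : Set (Z → ℝ)) :
    empRad S F = supSignedSum S F univ / (2 ^ m * m) :=
  rfl

theorem flipAt_involutive (j : Fin m) : Function.Involutive (flipAt j) := by
  intro σ
  simp [flipAt]

theorem sum_sign_eq_zero (i : Fin m) :
    ∑ σ : Fin m → Bool, (if σ i then (1 : ℝ) else -1) = 0 := by
  have hflip : ∑ σ : Fin m → Bool, (if σ i then (1 : ℝ) else -1)
      = ∑ σ : Fin m → Bool, -(if σ i then (1 : ℝ) else -1) :=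
    Fintype.sum_equiv (flipAt_involutive i).toPerm _ _ fun σ => by
      cases h : σ i <;> simp [flipAt, h]
  rw [sum_neg_distrib] at hflip
  linarith

theorem sum_signedSum_eq_zero (T : Finset (Fin m)) (f : Z → ℝ) :
    ∑ σ : Fin m → Bool, signedSum S T σ f = 0 := by
  simp only [signedSum]
  rw [sum_comm]
  exact sum_eq_zero fun i _ => by rw [← sum_mul, sum_sign_eq_zero, zero_mul]

theorem signedSum_insert_add_flipAt {T : Finset (Fin m)} {j : Fin m} (hj : j ∉ T)
    (σ : Fin m → Bool) (f : Z → ℝ) :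
    signedSum S (insert j T) σ f + signedSum S (insert j T) (flipAt j σ) f
      = 2 * signedSum S T σ f := by
  have hT : ∑ i ∈ T, (if flipAt j σ i then (1 : ℝ) else -1) * f (S i)
      = ∑ i ∈ T, (if σ i then (1 : ℝ) else -1) * f (S i) :=
    sum_congr rfl fun i hi => by
      rw [flipAt, Function.update_of_ne (ne_of_mem_of_not_mem hi hj)]
  rw [signedSum, signedSum, signedSum, sum_insert hj, sum_insert hj, hT, flipAt,
    Function.update_self]
  cases σ j <;> simp <;> ring

variable {S} {F : Set (Z → ℝ)}

theorem bddAbove_signedSum_of_insert {T : Finset (Fin m)} {j : Fin m}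
    (hbdd : ∀ σ, BddAbove (signedSum S (insert j T) σ '' F)) (σ : Fin m → Bool) :
    BddAbove (signedSum S T σ '' F) := by
  by_cases hj : j ∈ T
  · simpa [insert_eq_of_mem hj] using hbdd σ
  obtain ⟨b₁, hb₁⟩ := hbdd σ
  obtain ⟨b₂, hb₂⟩ := hbdd (flipAt j σ)
  refine ⟨(b₁ + b₂) / 2, ?_⟩
  rintro _ ⟨f, hf, rfl⟩
  have := signedSum_insert_add_flipAt S hj σ f
  linarith [hb₁ ⟨f, hf, rfl⟩, hb₂ ⟨f, hf, rfl⟩]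

theorem supSignedSum_le_insert (hF : F.Nonempty) {T : Finset (Fin m)} {j : Fin m}
    (hbdd : ∀ σ, BddAbove (signedSum S (insert j T) σ '' F)) :
    supSignedSum S F T ≤ supSignedSum S F (insert j T) := by
  by_cases hj : j ∈ T
  · rw [insert_eq_of_mem hj]
  have hjensen : ∀ σ, 2 * sSup (signedSum S T σ '' F) ≤
      sSup (signedSum S (insert j T) σ '' F)
        + sSup (signedSum S (insert j T) (flipAt j σ) '' F) := by
    intro σ
    rw [← le_div_iff₀' two_pos]
    refine csSup_le (hF.image _) ?_
    rintro _ ⟨f, hf, rfl⟩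
    have := signedSum_insert_add_flipAt S hj σ f
    linarith [le_csSup (hbdd σ) ⟨f, hf, rfl⟩, le_csSup (hbdd (flipAt j σ)) ⟨f, hf, rfl⟩]
  have hreindex := Equiv.sum_comp (flipAt_involutive j).toPerm
    fun σ => sSup (signedSum S (insert j T) σ '' F)
  simp only [Function.Involutive.coe_toPerm] at hreindex
  have := sum_le_sum fun σ (_ : σ ∈ univ) => hjensen σ
  rw [← mul_sum, sum_add_distrib, hreindex] at this
  unfold supSignedSum
  linarith

theorem bddAbove_signedSum_of_subset {T U : Finset (Fin m)} (hTU : T ⊆ U)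
    (hbdd : ∀ σ, BddAbove (signedSum S U σ '' F)) (σ : Fin m → Bool) :
    BddAbove (signedSum S T σ '' F) := by
  obtain ⟨V, rfl⟩ : ∃ V, U = T ∪ V := ⟨U, (union_eq_right.2 hTU).symm⟩
  clear hTU
  induction V using Finset.induction_on with
  | empty => simpa using hbdd σ
  | insert j V _ ih =>
    rw [union_insert] at hbdd
    exact ih (bddAbove_signedSum_of_insert hbdd)

theorem supSignedSum_mono (hF : F.Nonempty) {T U : Finset (Fin m)} (hTU : T ⊆ U)
    (hbdd : ∀ σ, BddAbove (signedSum S U σ '' F)) :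
    supSignedSum S F T ≤ supSignedSum S F U := by
  obtain ⟨V, rfl⟩ : ∃ V, U = T ∪ V := ⟨U, (union_eq_right.2 hTU).symm⟩
  clear hTU
  induction V using Finset.induction_on with
  | empty => simp
  | insert j V _ ih =>
    rw [union_insert] at hbdd ⊢
    exact (ih (bddAbove_signedSum_of_insert hbdd)).trans (supSignedSum_le_insert hF hbdd)

end SignedSums

theorem empRad_piecewise_le {Z : Type*} {m : ℕ} (S : Fin m → Z) {H : Set (Z → ℝ)}
    (hH : H.Nonempty) (hbdd : ∀ σ, BddAbove (signedSum S univ σ '' H))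
    (p : Z → Bool) (g : Z → ℝ) :
    empRad S {f | ∃ h ∈ H, f = fun z => if p z then h z else g z} ≤ empRad S H := by
  set Hc := {f | ∃ h ∈ H, f = fun z => if p z then h z else g z}
  set C := univ.filter fun i => p (S i)
  set D := univ.filter fun i => ¬p (S i)
  have hsplit : ∀ σ h, signedSum S univ σ (fun z => if p z then h z else g z)
      = signedSum S C σ h + signedSum S D σ g := fun σ h => by
    simp only [signedSum, mul_ite]
    exact sum_ite _ _
  have himage : ∀ σ, signedSum S univ σ '' Hc
      = (· + signedSum S D σ g) '' (signedSum S C σ '' H) := by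
    intro σ
    ext x
    constructor
    · rintro ⟨_, ⟨h, hh, rfl⟩, rfl⟩
      exact ⟨_, ⟨h, hh, rfl⟩, (hsplit σ h).symm⟩
    · rintro ⟨_, ⟨h, hh, rfl⟩, rfl⟩
      exact ⟨_, ⟨h, hh, rfl⟩, hsplit σ h⟩
  have hshift : ∀ σ, sSup (signedSum S univ σ '' Hc)
      = sSup (signedSum S C σ '' H) + signedSum S D σ g := fun σ => by
    rw [himage]
    exact ((OrderIso.addRight _).map_csSup' (hH.image _)
      (bddAbove_signedSum_of_subset (subset_univ C) hbdd σ)).symm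
  have hsup : supSignedSum S Hc univ = supSignedSum S H C := by
    rw [supSignedSum, sum_congr rfl fun σ _ => hshift σ, sum_add_distrib,
      sum_signedSum_eq_zero, add_zero, supSignedSum]
  rw [empRad_eq_supSignedSum, empRad_eq_supSignedSum, hsup]
  gcongr
  exact supSignedSum_mono hH (subset_univ C) hbdd

theorem rad_modified_le_general {X Y : Type*} {m : ℕ} (S : Fin m → X × Y)
    (H : Set (X × Y → ℝ)) (hHne : H.Nonempty)
    (c : X → Y → Bool) (M : ℝ)
    (hbdd : ∀ σ : Fin m → Bool,
      BddAbove ((fun f => ∑ i, (if σ i then (1 : ℝ) else -1) * f (S i)) '' H)) :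
    empRad S {g | ∃ h ∈ H, g = fun p : X × Y => if c p.1 p.2 then h p else -M}
      ≤ empRad S H :=
  empRad_piecewise_le S hHne hbdd (fun p => c p.1 p.2) fun _ => -M

/-- The empirical Rademacher complexity of the verifier-modified class
`H_c = { (x,y) ↦ if c(x,y) then h(x,y) else -M : h ∈ H }` is at most that of `H`. -/
theorem rad_modified_le {X Y : Type*} {m : ℕ} (S : Fin m → X × Y)
    (H : Set (X × Y → ℝ)) (hHne : H.Nonempty)
    (c : X → Y → Bool) (M : ℝ) (hM : 0 < M)
    (hbound : ∀ h ∈ H, ∀ p : X × Y, |h p| < M)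
    (hbdd : ∀ σ : Fin m → Bool,
      BddAbove ((fun f => ∑ i, (if σ i then (1 : ℝ) else -1) * f (S i)) '' H)) :
    empRad S {g | ∃ h ∈ H, g = fun p : X × Y => if c p.1 p.2 then h p else -M}
      ≤ empRad S H :=
  rad_modified_le_general S H hHne c M hbdd
end
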